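/- arXiv:1210.2271 — 4 statements merged into one kernel-verified Lean document; each statement's English description precedes it below -/
import Mathlib

section
/- Let V ⊂ ℝ^l be a linear subspace defined over the real algebraic numbers, and suppose V is not contained in any proper rational subspace of ℝ^l (i.e., any proper subspace defined over ℚ). Then there exists a vector w ∈ V whose coordinates are real algebraic numbers that are linearly independent over ℚ. -/
/-!
Pick finitely many vectors `v₁, …, vₖ` with algebraic coordinates spanning `V`, and let `F` be the
number field generated by their coordinates. Since `2 ^ (1 / p)` has degree `p` over `ℚ`, hence
degree at least `p / [F : ℚ]` over `F`, there are real algebraic numbers `a₁, …, aₖ` linearly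
independent over `F`. Put `w = ∑ aⱼ vⱼ`. If `c` is rational and `c ⬝ w = ∑ (c ⬝ vⱼ) aⱼ = 0`, then
all coefficients `c ⬝ vⱼ ∈ F` vanish, so `V` lies in the hyperplane `c⊥`. When `c ≠ 0` this
hyperplane is a proper rational subspace, so `c = 0`.
-/

open Polynomial IntermediateField Module

section RationalSubspace

variable {ι : Type*} [Fintype ι]

def IsRationalSubspace (W : Submodule ℝ (ι → ℝ)) : Prop :=
  ∃ S : Set (ι → ℚ), W = Submodule.span ℝ ((fun d i => (d i : ℝ)) '' S)

lemma ratCast_dotProduct_ratCast (c d : ι → ℚ) :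
    ((fun i => (c i : ℝ)) ⬝ᵥ fun i => (d i : ℝ)) = ((c ⬝ᵥ d : ℚ) : ℝ) :=
  ((Rat.castHom ℝ).map_dotProduct c d).symm

lemma mem_span_ratCast_of_dotProduct_eq_zero {c : ι → ℚ} (hc : c ≠ 0) {x : ι → ℝ}
    (hx : (fun i => (c i : ℝ)) ⬝ᵥ x = 0) :
    x ∈ Submodule.span ℝ ((fun d i => (d i : ℝ)) '' {d : ι → ℚ | c ⬝ᵥ d = 0}) := by
  classical
  obtain ⟨i₀, hi₀ : c i₀ ≠ 0⟩ := Function.ne_iff.mp hc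
  let u : ι → ι → ℚ := fun j => Pi.single j 1 - (c j / c i₀) • Pi.single i₀ 1
  have hu : ∀ j, c ⬝ᵥ u j = 0 := fun j => by
    simp [u, dotProduct_sub, dotProduct_smul, div_mul_cancel₀ _ hi₀]
  have hx_eq : x = ∑ j, x j • fun i => (u j i : ℝ) := by
    have hx' : ∑ j, x j * ((c j : ℝ) / c i₀) = 0 := by
      simp_rw [← mul_div_assoc, ← Finset.sum_div, mul_comm (x _)]
      rw [← dotProduct, hx, zero_div]
    funext i
    by_cases hi : i = i₀ <;>
      simp [u, Pi.single_apply, apply_ite (Rat.cast : ℚ → ℝ), mul_sub, Finset.sum_sub_distrib,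
        hi, hx']
  rw [hx_eq]
  exact Submodule.sum_mem _ fun j _ =>
    Submodule.smul_mem _ _ (Submodule.subset_span ⟨u j, hu j, rfl⟩)

lemma eq_zero_of_le_ker_dotProduct {V : Submodule ℝ (ι → ℝ)}
    (hV : ∀ W, IsRationalSubspace W → V ≤ W → W = ⊤) {c : ι → ℚ}
    (hc : V ≤ LinearMap.ker (dotProductBilin ℝ ℝ fun i => (c i : ℝ))) : c = 0 := by
  classical
  by_contra hc0
  set W := Submodule.span ℝ ((fun d i => (d i : ℝ)) '' {d : ι → ℚ | c ⬝ᵥ d = 0})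
  have hW_top : W = ⊤ :=
    hV W ⟨_, rfl⟩ fun x hx => mem_span_ratCast_of_dotProduct_eq_zero hc0 (hc hx)
  have hW_ker : W ≤ LinearMap.ker (dotProductBilin ℝ ℝ fun i => (c i : ℝ)) := by
    rw [Submodule.span_le]
    rintro _ ⟨d, hd, rfl⟩
    simpa [ratCast_dotProduct_ratCast] using hd
  refine hc0 (funext fun i => ?_)
  simpa using hW_ker (hW_top ▸ Submodule.mem_top : Pi.single i 1 ∈ W)

end RationalSubspace

lemma rat_pow_ne_prime {q p : ℕ} [Fact q.Prime] (hp : 1 < p) (b : ℚ) : b ^ p ≠ q := by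
  intro hb
  have hval := padicValRat.pow (p := q) b (k := p)
  rw [hb, padicValRat.self (Fact.out : q.Prime).one_lt] at hval
  have hp1 : (p : ℤ) = 1 := Int.eq_one_of_mul_eq_one_right (Nat.cast_nonneg p) hval.symm
  exact hp.ne' (by exact_mod_cast hp1)

lemma minpoly_prime_rpow_inv {q p : ℕ} [Fact q.Prime] (hp : p.Prime) :
    minpoly ℚ ((q : ℝ) ^ (p : ℝ)⁻¹) = X ^ p - C (q : ℚ) := by
  refine (minpoly.eq_of_irreducible_of_monic
    (X_pow_sub_C_irreducible_of_prime hp (rat_pow_ne_prime hp.one_lt)) ?_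
    (monic_X_pow_sub_C _ hp.ne_zero)).symm
  simp [Real.rpow_inv_natCast_pow (Nat.cast_nonneg q) hp.ne_zero]

lemma natDegree_minpoly_le_finrank_mul {K L : Type*} [Field K] [Field L] [Algebra K L]
    (F : IntermediateField K L) [FiniteDimensional K F] {x : L} (hx : IsIntegral K x) :
    (minpoly K x).natDegree ≤ finrank K F * (minpoly F x).natDegree := by
  have hxF : IsIntegral F x := hx.tower_top
  have : FiniteDimensional F F⟮x⟯ := adjoin.finiteDimensional hxF
  have : FiniteDimensional K F⟮x⟯ := FiniteDimensional.trans K F F⟮x⟯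
  have : Free F F⟮x⟯ := Free.of_divisionRing _ _
  have : IsScalarTower K F⟮x⟯ L := IsScalarTower.of_algebraMap_eq fun _ => rfl
  rw [← adjoin.finrank hxF, finrank_mul_finrank K F F⟮x⟯]
  have hx' := minpoly.algebraMap_eq (A := K) (algebraMap F⟮x⟯ L).injective
    ⟨x, mem_adjoin_simple_self F x⟩
  exact hx' ▸ minpoly.natDegree_le _

lemma exists_isAlgebraic_le_natDegree_minpoly (F : IntermediateField ℚ ℝ)
    [FiniteDimensional ℚ F] (n : ℕ) :
    ∃ α : ℝ, IsAlgebraic ℚ α ∧ n ≤ (minpoly F α).natDegree := by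
  obtain ⟨p, hpn, hp⟩ := Nat.exists_infinite_primes (finrank ℚ F * n + 1)
  have : Fact (Nat.Prime 2) := ⟨Nat.prime_two⟩
  have hmin := minpoly_prime_rpow_inv (q := 2) hp
  have hint : IsIntegral ℚ (((2 : ℕ) : ℝ) ^ (p : ℝ)⁻¹) :=
    minpoly.ne_zero_iff.mp (hmin ▸ X_pow_sub_C_ne_zero hp.pos _)
  refine ⟨_, hint.isAlgebraic, ?_⟩
  have hle := natDegree_minpoly_le_finrank_mul F hint
  rw [hmin, natDegree_X_pow_sub_C] at hle
  exact (Nat.lt_of_mul_lt_mul_left (hpn.trans hle)).le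

lemma exists_isAlgebraic_linearIndependent (F : IntermediateField ℚ ℝ) [FiniteDimensional ℚ F]
    (ι : Type*) [Fintype ι] :
    ∃ a : ι → ℝ, (∀ j, IsAlgebraic ℚ (a j)) ∧ LinearIndependent F a := by
  obtain ⟨α, hα, hdeg⟩ := exists_isAlgebraic_le_natDegree_minpoly F (Fintype.card ι)
  let e : ι ↪ Fin (minpoly F α).natDegree :=
    (Fintype.equivFin ι).toEmbedding.trans (Fin.castLEEmb hdeg)
  exact ⟨fun j => α ^ (e j : ℕ), fun j => hα.pow _, (linearIndependent_pow α).comp e e.injective⟩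

lemma dotProduct_eq_zero_of_linearIndependent {K L : Type*} [Field K] [Field L] [Algebra K L]
    {F : IntermediateField K L} {ι n : Type*} [Fintype ι] [Fintype n] {a : ι → L}
    (ha : LinearIndependent F a) {v : ι → n → L} (hv : ∀ j i, v j i ∈ F) {c : n → L}
    (hc : ∀ i, c i ∈ F) (h : c ⬝ᵥ ∑ j, a j • v j = 0) (j : ι) : c ⬝ᵥ v j = 0 := by
  have hmem : ∀ j, c ⬝ᵥ v j ∈ F := fun j =>
    sum_mem fun i _ => mul_mem (hc i) (hv j i)
  have hrel : ∑ j, (⟨c ⬝ᵥ v j, hmem j⟩ : F) • a j = 0 := by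
    change ∑ j, c ⬝ᵥ v j * a j = 0
    simpa [dotProduct_sum, dotProduct_smul, mul_comm] using h
  simpa using congrArg Subtype.val (Fintype.linearIndependent_iff.mp ha _ hrel j)

/-- If `V ⊆ ℝ^l` is a subspace defined over the real algebraic numbers
(i.e. spanned by vectors with algebraic coordinates) which is not contained in any proper
rational subspace, then `V` contains a vector `w` whose coordinates are (real) algebraic
numbers that are linearly independent over `ℚ`. -/
theorem exists_algebraic_vector_with_rationally_independent_coordinates
    (l : ℕ) (V : Submodule ℝ (Fin l → ℝ))
    -- V is defined over the real algebraic numbers: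
    (halg : ∃ b : Set (Fin l → ℝ), V = Submodule.span ℝ b ∧
      ∀ v ∈ b, ∀ i, IsAlgebraic ℚ (v i))
    -- V is not contained in any proper subspace defined over ℚ:
    (hirr : ∀ W : Submodule ℝ (Fin l → ℝ),
      (∃ S : Set (Fin l → ℚ), W = Submodule.span ℝ ((fun c : Fin l → ℚ => fun i => (c i : ℝ)) '' S)) →
      V ≤ W → W = ⊤) :
    ∃ w ∈ V, (∀ i, IsAlgebraic ℚ (w i)) ∧
      ∀ c : Fin l → ℚ, (∑ i, (c i : ℝ) * w i) = 0 → c = 0 := by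
  obtain ⟨b, hVb, hb⟩ := halg
  obtain ⟨v, hvb, hspan, -⟩ := Submodule.exists_fun_fin_finrank_span_eq ℝ b
  replace hspan := hspan.trans hVb.symm
  have hv_alg : ∀ j i, IsAlgebraic ℚ (v j i) := fun j i => hb _ (hvb j) i
  let F := adjoin ℚ (Set.range fun p : Fin _ × Fin l => v p.1 p.2)
  have : FiniteDimensional ℚ F := finiteDimensional_adjoin <| by
    rintro _ ⟨⟨j, i⟩, rfl⟩
    exact (hv_alg j i).isIntegral
  have hvF : ∀ j i, v j i ∈ F := fun j i => subset_adjoin ℚ _ ⟨(j, i), rfl⟩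
  obtain ⟨a, ha_alg, ha_ind⟩ := exists_isAlgebraic_linearIndependent F (Fin _)
  refine ⟨∑ j, a j • v j, ?_, fun i => ?_, fun c hc => ?_⟩
  · rw [← hspan]
    exact Submodule.sum_mem _ fun j _ => Submodule.smul_mem _ _ (Submodule.subset_span ⟨j, rfl⟩)
  · rw [← mem_algebraicClosure_iff, Finset.sum_apply]
    exact sum_mem fun j _ => mul_mem (mem_algebraicClosure_iff.mpr (ha_alg j))
      (mem_algebraicClosure_iff.mpr (hv_alg j i))
  · refine eq_zero_of_le_ker_dotProduct hirr ?_
    rw [← hspan, Submodule.span_le]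
    rintro _ ⟨j, rfl⟩
    exact dotProduct_eq_zero_of_linearIndependent ha_ind hvF
      (fun i => SubfieldClass.ratCast_mem F (c i)) hc j
end

section
/- Let w ∈ ℝ^l be a vector whose coordinates are real algebraic numbers linearly independent over ℚ. Then there exist constants c₁ > 0 and c₂ > 0 such that |⟨z, w⟩| ≥ c₁ ‖z‖^(−c₂) for all nonzero integer vectors z ∈ ℤ^l. -/
/-!
Liouville's argument. Clearing denominators, `m • ∑ zᵢ wᵢ` is a nonzero algebraic integer of the
number field `K = ℚ(w)`, so its norm is a nonzero rational integer: the product of its absolute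
values under all embeddings `K → ℂ` is at least `1`. Every factor but the one of the given real
embedding is `O(‖z‖)`, hence the remaining factor `|m| |∑ zᵢ wᵢ|` is at least `c ‖z‖^{-[K:ℚ]}`.
-/

open Module

lemma norm_sum_zsmul_le {ι E : Type*} [Fintype ι] [SeminormedAddCommGroup E]
    (z : ι → ℤ) (a : ι → E) : ‖∑ i, z i • a i‖ ≤ ‖z‖ * ∑ i, ‖a i‖ :=
  calc ‖∑ i, z i • a i‖ ≤ ∑ i, ‖z i‖ * ‖a i‖ :=
        (norm_sum_le _ _).trans (Finset.sum_le_sum fun i _ => norm_zsmul_le _ _)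
    _ ≤ ∑ i, ‖z‖ * ‖a i‖ :=
        Finset.sum_le_sum fun i _ => by gcongr; exact norm_le_pi_norm z i
    _ = ‖z‖ * ∑ i, ‖a i‖ := Finset.mul_sum _ _ _ |>.symm

lemma one_le_pi_norm_of_ne_zero {ι : Type*} [Fintype ι] {z : ι → ℤ} (hz : z ≠ 0) : 1 ≤ ‖z‖ := by
  obtain ⟨i, hi⟩ := Function.ne_iff.mp hz
  calc (1 : ℝ) ≤ |(z i : ℝ)| := by exact_mod_cast Int.one_le_abs hi
    _ = ‖z i‖ := (Int.norm_eq_abs _).symm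
    _ ≤ ‖z‖ := norm_le_pi_norm z i

lemma pi_norm_intCast_comp {ι : Type*} [Fintype ι] (z : ι → ℤ) :
    ‖fun i => (z i : ℝ)‖ = ‖z‖ := by
  simp only [Pi.norm_def]
  congr 2

section Embeddings

variable {K : Type*} [Field K] [Algebra ℚ K] [FiniteDimensional ℚ K]

lemma one_le_prod_norm_embeddings {x : K} (hx : x ≠ 0) (hint : IsIntegral ℤ x) :
    1 ≤ ∏ σ : K →ₐ[ℚ] ℂ, ‖σ x‖ := by
  obtain ⟨n, hn⟩ := IsIntegrallyClosed.isIntegral_iff.mp (Algebra.isIntegral_norm ℚ hint)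
  have hn0 : n ≠ 0 := by
    rintro rfl
    exact Algebra.norm_ne_zero_iff.mpr hx (by rw [← hn]; simp)
  calc (1 : ℝ) ≤ |(n : ℝ)| := by exact_mod_cast Int.one_le_abs hn0
    _ = ‖algebraMap ℚ ℂ (Algebra.norm ℚ x)‖ := by
        rw [← hn, eq_ratCast, eq_intCast, Rat.cast_intCast, Complex.norm_intCast]
    _ = ∏ σ : K →ₐ[ℚ] ℂ, ‖σ x‖ := by
        rw [Algebra.norm_eq_prod_embeddings, norm_prod]

lemma one_le_norm_mul_pow_finrank {x : K} (hx : x ≠ 0) (hint : IsIntegral ℤ x)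
    (σ₀ : K →ₐ[ℚ] ℂ) {R : ℝ} (hR : 1 ≤ R) (hbound : ∀ σ : K →ₐ[ℚ] ℂ, ‖σ x‖ ≤ R) :
    1 ≤ ‖σ₀ x‖ * R ^ finrank ℚ K := by
  classical
  have hrest : ∏ σ ∈ Finset.univ.erase σ₀, ‖σ x‖ ≤ R ^ finrank ℚ K :=
    calc ∏ σ ∈ Finset.univ.erase σ₀, ‖σ x‖ ≤ ∏ _σ ∈ Finset.univ.erase σ₀, R :=
          Finset.prod_le_prod (fun _ _ => norm_nonneg _) fun σ _ => hbound σ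
      _ = R ^ (Finset.univ.erase σ₀).card := Finset.prod_const R
      _ ≤ R ^ finrank ℚ K := by
          rw [← AlgHom.card ℚ K ℂ]
          exact pow_le_pow_right₀ hR Finset.card_erase_le
  calc 1 ≤ ∏ σ : K →ₐ[ℚ] ℂ, ‖σ x‖ := one_le_prod_norm_embeddings hx hint
    _ = ‖σ₀ x‖ * ∏ σ ∈ Finset.univ.erase σ₀, ‖σ x‖ :=
        (Finset.mul_prod_erase _ _ (Finset.mem_univ σ₀)).symm
    _ ≤ ‖σ₀ x‖ * R ^ finrank ℚ K := by gcongr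

theorem exists_pos_mul_rpow_le_norm_sum_zsmul {ι : Type*} [Fintype ι] (v : ι → K)
    (σ₀ : K →ₐ[ℚ] ℂ) :
    ∃ c > (0 : ℝ), ∀ z : ι → ℤ, ∑ i, z i • v i ≠ 0 →
      c * ‖z‖ ^ (-(finrank ℚ K : ℝ)) ≤ ‖σ₀ (∑ i, z i • v i)‖ := by
  classical
  obtain ⟨m, hm0, hmul⟩ := exists_integral_multiples ℤ ℚ (Finset.univ.image v)
  have hint : ∀ i, IsIntegral ℤ (m • v i) := fun i =>
    hmul _ (Finset.mem_image_of_mem _ (Finset.mem_univ i))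
  set B : ℝ := 1 + ∑ σ : K →ₐ[ℚ] ℂ, ∑ i, ‖σ (m • v i)‖
  have hB : ∀ σ : K →ₐ[ℚ] ℂ, ∑ i, ‖σ (m • v i)‖ ≤ B := fun σ => by
    have := Finset.single_le_sum (f := fun τ : K →ₐ[ℚ] ℂ => ∑ i, ‖τ (m • v i)‖)
      (fun _ _ => by positivity) (Finset.mem_univ σ)
    linarith
  have hB1 : 1 ≤ B := le_add_of_nonneg_right (by positivity)
  have hm_pos : (0 : ℝ) < |(m : ℝ)| := abs_pos.mpr (Int.cast_ne_zero.mpr hm0)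
  refine ⟨(|(m : ℝ)| * B ^ finrank ℚ K)⁻¹, by positivity, fun z hy => ?_⟩
  set y := ∑ i, z i • v i
  have hz : 1 ≤ ‖z‖ := one_le_pi_norm_of_ne_zero fun h => hy (by simp [y, h])
  have hx : m • y = ∑ i, z i • m • v i := by
    simp only [y, Finset.smul_sum, smul_comm m]
  have hxint : IsIntegral ℤ (m • y) := by
    rw [hx]
    exact IsIntegral.sum _ fun i _ => (hint i).zsmul _
  have hbound : ∀ σ : K →ₐ[ℚ] ℂ, ‖σ (m • y)‖ ≤ B * ‖z‖ := fun σ =>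
    calc ‖σ (m • y)‖ = ‖∑ i, z i • σ (m • v i)‖ := by simp only [hx, map_sum, map_zsmul]
      _ ≤ ‖z‖ * ∑ i, ‖σ (m • v i)‖ := norm_sum_zsmul_le _ _
      _ ≤ B * ‖z‖ := by rw [mul_comm]; gcongr; exact hB σ
  have hx0 : m • y ≠ 0 := by
    rw [← Int.cast_smul_eq_zsmul ℚ]
    exact smul_ne_zero (Int.cast_ne_zero.mpr hm0) hy
  have key := one_le_norm_mul_pow_finrank hx0 hxint σ₀
    (one_le_mul_of_one_le_of_one_le hB1 hz) hbound
  rw [map_zsmul, zsmul_eq_mul, norm_mul, Complex.norm_intCast, mul_pow] at key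
  rw [Real.rpow_neg (by positivity), Real.rpow_natCast, ← mul_inv,
    inv_le_iff_one_le_mul₀ (by positivity)]
  exact key.trans_eq (by ring)

end Embeddings

/-- Diophantine property of algebraic numbers: if the coordinates of
`w ∈ ℝ^l` are real algebraic numbers linearly independent over `ℚ`, then there are
`c₁, c₂ > 0` such that `|⟨z, w⟩| ≥ c₁ ‖z‖^(−c₂)` for all nonzero `z ∈ ℤ^l`. -/
theorem diophantine_property_of_algebraic_vectors
    (l : ℕ) (w : Fin l → ℝ)
    (halg : ∀ i, IsAlgebraic ℚ (w i))
    (hindep : ∀ c : Fin l → ℚ, (∑ i, (c i : ℝ) * w i) = 0 → c = 0) :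
    ∃ c₁ > (0 : ℝ), ∃ c₂ > (0 : ℝ), ∀ z : Fin l → ℤ, z ≠ 0 →
      c₁ * ‖(fun i => (z i : ℝ))‖ ^ (-c₂) ≤ |∑ i, (z i : ℝ) * w i| := by
  let K := IntermediateField.adjoin ℚ (Set.range w)
  have : FiniteDimensional ℚ K := IntermediateField.finiteDimensional_adjoin <| by
    rintro _ ⟨i, rfl⟩
    exact (halg i).isIntegral
  let v : Fin l → K := fun i => ⟨w i, IntermediateField.subset_adjoin ℚ _ ⟨i, rfl⟩⟩
  let σ₀ : K →ₐ[ℚ] ℂ := (Complex.ofRealAm.restrictScalars ℚ).comp K.val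
  have hσ₀ (z : Fin l → ℤ) : σ₀ (∑ i, z i • v i) = ((∑ i, (z i : ℝ) * w i : ℝ) : ℂ) := by
    simp only [map_sum, zsmul_eq_mul, map_mul, map_intCast, Complex.ofReal_sum, Complex.ofReal_mul,
      Complex.ofReal_intCast]
    rfl
  obtain ⟨c, hc, hliouville⟩ := exists_pos_mul_rpow_le_norm_sum_zsmul v σ₀
  refine ⟨c, hc, finrank ℚ K, by exact_mod_cast finrank_pos, fun z hz => ?_⟩
  have hS : ∑ i, (z i : ℝ) * w i ≠ 0 := fun h => hz <| funext fun i => by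
    simpa using congrFun (hindep (fun i => z i) (by exact_mod_cast h)) i
  have := hliouville z fun h => hS (Complex.ofReal_eq_zero.mp (by rw [← hσ₀, h, map_zero]))
  rwa [hσ₀, Complex.norm_real, Real.norm_eq_abs, ← pi_norm_intCast_comp] at this
end

section
/- Let (X, B, μ, α) be an invertible ergodic measure-preserving system and f ∈ L²(X) with ∫ f dμ = 0. Suppose A is a sub-σ-algebra of B such that A_n = α^{−n}(A) is non-increasing in n, and that Σ_{n>0} ‖E(f | A_n)‖₂ < ∞ and Σ_{n<0} ‖f − E(f | A_n)‖₂ < ∞. Then the series σ² = ∫ f² dμ + 2 Σ_{j≥1} ∫ (f∘α^j) f dμ converges to a finite value. -/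
/-!
Split `f = E(f | A_k) + (f - E(f | A_k))`. Since `α` preserves `L²` norms, by Cauchy–Schwarz
the second part contributes at most `‖f‖₂ ‖f - E(f | A_k)‖₂` to the correlation
`∫ (f ∘ α^n) f`. The first part composed with `α^n` is `A_{k+n}`-measurable, so it only
correlates with `E(f | A_{k+n})` and contributes at most `‖f‖₂ ‖E(f | A_{k+n})‖₂`.
Choosing `k ≈ -n/2` makes both indices of size about `n/2`, and the two summable Gordin
series dominate the correlations.
-/

open MeasureTheory

lemma Summable.comp_div_two {M : Type*} [AddCommMonoid M] [TopologicalSpace M] [ContinuousAdd M]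
    {b : ℕ → M} (hb : Summable b) : Summable fun j => b (j / 2) := by
  refine Summable.even_add_odd ?_ ?_
  · simpa using hb
  · simpa [Nat.mul_add_div] using hb

lemma summable_of_abs_add_le {a b c : ℕ → ℝ} (ha : Summable a) (hb : Summable b)
    (h : ∀ i j, |c (i + j)| ≤ a i + b j) : Summable c := by
  refine .of_norm_bounded
    (ha.comp_div_two.add ((summable_nat_add_iff 1).mpr hb.comp_div_two)) fun j => ?_
  have := h (j / 2) ((j + 1) / 2)
  rwa [show j / 2 + (j + 1) / 2 = j by omega, ← Real.norm_eq_abs] at this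

section

variable {X : Type*} {m0 : MeasurableSpace X} {μ : Measure X}

lemma abs_integral_mul_le_eLpNorm_mul_eLpNorm {u v : X → ℝ} (hu : MemLp u 2 μ)
    (hv : MemLp v 2 μ) :
    |∫ x, u x * v x ∂μ| ≤ (eLpNorm u 2 μ).toReal * (eLpNorm v 2 μ).toReal := by
  have holder := eLpNorm_smul_le_mul_eLpNorm (p := 2) (q := 2) (r := 1) hv.1 hu.1
  calc |∫ x, u x * v x ∂μ|
      ≤ ∫ x, ‖(u * v) x‖ ∂μ := abs_integral_le_integral_abs
    _ = (eLpNorm (u * v) 1 μ).toReal := by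
      rw [toReal_eLpNorm (hu.1.mul hv.1), lpNorm_one_eq_integral_norm (hu.1.mul hv.1)]
    _ ≤ (eLpNorm u 2 μ * eLpNorm v 2 μ).toReal :=
      ENNReal.toReal_mono (ENNReal.mul_ne_top hu.eLpNorm_ne_top hv.eLpNorm_ne_top) holder
    _ = _ := ENNReal.toReal_mul

lemma integral_mul_condExp_of_stronglyMeasurable {m : MeasurableSpace X} (hm : m ≤ m0)
    [SigmaFinite (μ.trim hm)] {g f : X → ℝ} (hg : StronglyMeasurable[m] g)
    (hgf : Integrable (g * f) μ) (hf : Integrable f μ) :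
    ∫ x, g x * f x ∂μ = ∫ x, g x * (μ[f | m]) x ∂μ :=
  calc ∫ x, g x * f x ∂μ = ∫ x, (μ[g * f | m]) x ∂μ := (integral_condExp hm).symm
    _ = ∫ x, g x * (μ[f | m]) x ∂μ :=
      integral_congr_ae (condExp_mul_of_stronglyMeasurable_left hg hgf hf)

lemma abs_integral_comp_mul_le [IsFiniteMeasure μ] {φ : X → X} (hφ : MeasurePreserving φ μ μ)
    {m m' : MeasurableSpace X} (hm' : m' ≤ m0) (hφm : Measurable[m', m] φ) {f : X → ℝ} (hf : MemLp f 2 μ) :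
    |∫ x, f (φ x) * f x ∂μ| ≤ (eLpNorm f 2 μ).toReal *
      ((eLpNorm (f - μ[f | m]) 2 μ).toReal + (eLpNorm (μ[f | m']) 2 μ).toReal) := by
  set g := μ[f | m]
  have hg : MemLp g 2 μ := hf.condExp one_le_two
  have hgφ : MemLp (g ∘ φ) 2 μ := hg.comp_measurePreserving hφ
  have hdφ : MemLp ((f - g) ∘ φ) 2 μ := (hf.sub hg).comp_measurePreserving hφ
  have hsplit : ∫ x, f (φ x) * f x ∂μ =
      ∫ x, g (φ x) * f x ∂μ + ∫ x, (f - g) (φ x) * f x ∂μ := by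
    have hint₁ : Integrable (fun x => g (φ x) * f x) μ := hgφ.integrable_mul hf
    have hint₂ : Integrable (fun x => (f - g) (φ x) * f x) μ := hdφ.integrable_mul hf
    rw [← integral_add hint₁ hint₂]
    simp only [Pi.sub_apply]
    congr with x
    ring
  have hpull : ∫ x, g (φ x) * f x ∂μ = ∫ x, g (φ x) * (μ[f | m']) x ∂μ :=
    integral_mul_condExp_of_stronglyMeasurable hm'
      (stronglyMeasurable_condExp.comp_measurable hφm) (hgφ.integrable_mul hf)
      (hf.integrable one_le_two)
  have hgφ_le : (eLpNorm (g ∘ φ) 2 μ).toReal ≤ (eLpNorm f 2 μ).toReal := by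
    rw [eLpNorm_comp_measurePreserving hg.1 hφ]
    exact ENNReal.toReal_mono hf.eLpNorm_ne_top (eLpNorm_condExp_le_eLpNorm f one_le_two)
  calc |∫ x, f (φ x) * f x ∂μ|
      ≤ |∫ x, g (φ x) * (μ[f | m']) x ∂μ| + |∫ x, (f - g) (φ x) * f x ∂μ| := by
        rw [hsplit, hpull]; exact abs_add_le _ _
    _ ≤ (eLpNorm (g ∘ φ) 2 μ).toReal * (eLpNorm (μ[f | m']) 2 μ).toReal
          + (eLpNorm ((f - g) ∘ φ) 2 μ).toReal * (eLpNorm f 2 μ).toReal :=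
        add_le_add (abs_integral_mul_le_eLpNorm_mul_eLpNorm hgφ (hf.condExp one_le_two))
          (abs_integral_mul_le_eLpNorm_mul_eLpNorm hdφ hf)
    _ ≤ _ := by
        rw [eLpNorm_comp_measurePreserving (hf.sub hg).1 hφ]
        nlinarith [ENNReal.toReal_nonneg (a := eLpNorm (μ[f | m']) 2 μ),
          ENNReal.toReal_nonneg (a := eLpNorm (f - g) 2 μ)]

lemma MeasureTheory.MeasurePreserving.perm_pow {α : Equiv.Perm X}
    (hα : MeasurePreserving α μ μ) (n : ℕ) : MeasurePreserving ⇑(α ^ n) μ μ := by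
  rw [Equiv.Perm.coe_pow]
  exact hα.iterate n

lemma MeasurableSpace.comap_comap_perm_zpow (A : MeasurableSpace X) (α : Equiv.Perm X)
    (k n : ℤ) : (A.comap ⇑(α ^ k)).comap ⇑(α ^ n) = A.comap ⇑(α ^ (k + n)) := by
  rw [MeasurableSpace.comap_comp, zpow_add, Equiv.Perm.coe_mul]

lemma abs_integral_perm_zpow_mul_le [IsFiniteMeasure μ] {α : Equiv.Perm X}
    (hα : MeasurePreserving α μ μ) {A : MeasurableSpace X} (hA : A ≤ m0) {f : X → ℝ}
    (hf : MemLp f 2 μ) (i j : ℕ) :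
    |∫ x, f ((α ^ ((i : ℤ) + j + 2)) x) * f x ∂μ| ≤ (eLpNorm f 2 μ).toReal *
      ((eLpNorm (f - μ[f | A.comap ⇑(α ^ (-(i : ℤ) - 1))]) 2 μ).toReal +
        (eLpNorm (μ[f | A.comap ⇑(α ^ ((j : ℤ) + 1))]) 2 μ).toReal) := by
  refine abs_integral_comp_mul_le ?_ ?_ (Measurable.of_comap_le ?_) hf
  · rw [show (i : ℤ) + j + 2 = ((i + j + 2 : ℕ) : ℤ) by push_cast; ring, zpow_natCast]
    exact hα.perm_pow _
  · rw [show (j : ℤ) + 1 = ((j + 1 : ℕ) : ℤ) by push_cast; ring, zpow_natCast]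
    -- `A` is a local instance here, so `.measurable` would be elaborated against `A`;
    -- destructuring takes the σ-algebras from the type instead
    obtain ⟨hmeas, -⟩ := hα.perm_pow (j + 1)
    exact (MeasurableSpace.comap_mono hA).trans hmeas.comap_le
  · rw [MeasurableSpace.comap_comap_perm_zpow, show -(i : ℤ) - 1 + (i + j + 2) = j + 1 by ring]

end

theorem gordin_asymptotic_variance_finite_general
    {X : Type*} [m0 : MeasurableSpace X]
    (μ : Measure X) [IsProbabilityMeasure μ]
    (α : X ≃ X) (hα : MeasurePreserving α μ μ)
    (f : X → ℝ) (hf : MemLp f 2 μ)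
    (A : MeasurableSpace X) (hA : A ≤ m0)
    (An : ℤ → MeasurableSpace X)
    (hAn : ∀ n : ℤ, An n = MeasurableSpace.comap (fun x => (α ^ n : Equiv.Perm X) x) A)
    (h1 : Summable fun n : ℕ => (eLpNorm (μ[f | An ((n : ℤ) + 1)]) 2 μ).toReal)
    (h2 : Summable fun n : ℕ => (eLpNorm (f - μ[f | An (-(n : ℤ) - 1)]) 2 μ).toReal) :
    Summable fun j : ℕ => ∫ x, f ((α ^ ((j : ℤ) + 1) : Equiv.Perm X) x) * f x ∂μ := by
  refine (summable_nat_add_iff 1).mp <| summable_of_abs_add_le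
    (h2.mul_left (eLpNorm f 2 μ).toReal) (h1.mul_left (eLpNorm f 2 μ).toReal) fun i j => ?_
  rw [← mul_add, hAn, hAn, show ((i + j + 1 : ℕ) : ℤ) + 1 = i + j + 2 by push_cast; ring]
  exact abs_integral_perm_zpow_mul_le hα hA hf i j

/-- (Gordin) For an invertible ergodic measure-preserving system and
`f ∈ L²` with zero mean, under the Gordin conditions on a non-increasing filtration
`A_n = α^{−n}(A)`, the series `σ² = ∫ f² + 2 Σ_{j≥1} ∫ (f∘α^j) f` converges
(i.e. the correlation series is summable). -/
theorem gordin_asymptotic_variance_finite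
    {X : Type*} [m0 : MeasurableSpace X]
    (μ : Measure X) [IsProbabilityMeasure μ]
    (α : X ≃ X) (hα : MeasurePreserving α μ μ) (hαsymm : MeasurePreserving α.symm μ μ)
    (herg : Ergodic α μ)
    (f : X → ℝ) (hf : MemLp f 2 μ) (hf0 : ∫ x, f x ∂μ = 0)
    (A : MeasurableSpace X) (hA : A ≤ m0)
    (An : ℤ → MeasurableSpace X)
    (hAn : ∀ n : ℤ, An n = MeasurableSpace.comap (fun x => (α ^ n : Equiv.Perm X) x) A)
    (hmono : ∀ n m : ℤ, n ≤ m → An m ≤ An n)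
    (h1 : Summable fun n : ℕ => (eLpNorm (μ[f | An ((n : ℤ) + 1)]) 2 μ).toReal)
    (h2 : Summable fun n : ℕ => (eLpNorm (f - μ[f | An (-(n : ℤ) - 1)]) 2 μ).toReal) :
    Summable fun j : ℕ => ∫ x, f ((α ^ ((j : ℤ) + 1) : Equiv.Perm X) x) * f x ∂μ :=
  gordin_asymptotic_variance_finite_general (m0 := m0) μ α hα f hf A hA An hAn h1 h2
end

section
/- Let α be an ergodic automorphism of a compact nilmanifold X = G/Λ with central fibration: Z the center of G, ZΛ closed in G, and the action of α on the torus T = ZΛ/Λ ergodic. If the factor system α on Y = G/(ZΛ) is Bernoulli and α on T is Bernoulli, then α on X, being measurably isomorphic to the direct product of these two systems, is Bernoulli. -/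
open MeasureTheory

/-- A measure-preserving system `(X, μ, T)` is *Bernoulli* if it is measurably
isomorphic (mod 0) to a Bernoulli shift: there is a probability space `(A, ν)` and a
measurable, a.e. invertible, equivariant map `e : X → A^ℤ` whose pushforward has i.i.d.
coordinates of law `ν`. -/
def IsBernoulli {X : Type*} [MeasurableSpace X] (μ : Measure X) (T : X → X) : Prop :=
  ∃ (A : Type) (_ : MeasurableSpace A) (ν : Measure A), IsProbabilityMeasure ν ∧
    ∃ e : X → ℤ → A, Measurable e ∧
      (∀ᵐ x ∂μ, e (T x) = fun n => e x (n + 1)) ∧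
      (∀ s : Finset ℤ,
        Measure.map (fun x (i : s) => e x (i : ℤ)) μ = Measure.pi fun _ : s => ν) ∧
      ∃ g : (ℤ → A) → X, Measurable g ∧ ∀ᵐ x ∂μ, g (e x) = x

theorem MeasureTheory.Measure.map_prod_eq_pi_prod {Y T A B ι : Type*} [MeasurableSpace Y] [MeasurableSpace T]
    [MeasurableSpace A] [MeasurableSpace B] [Fintype ι] {μY : Measure Y} {μT : Measure T}
    [SFinite μY] [SFinite μT] {νA : Measure A} {νB : Measure B} [SigmaFinite νA]
    [SigmaFinite νB] {F : Y → ι → A} {G : T → ι → B} (hF : Measurable F) (hG : Measurable G)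
    (hFμ : μY.map F = Measure.pi fun _ => νA) (hGμ : μT.map G = Measure.pi fun _ => νB) :
    (μY.prod μT).map (fun p i => (F p.1 i, G p.2 i)) = Measure.pi fun _ : ι => νA.prod νB := by
  have hsplit : (fun (p : Y × T) i => (F p.1 i, G p.2 i)) =
      (MeasurableEquiv.arrowProdEquivProdArrow A B ι).symm ∘ Prod.map F G := rfl
  rw [hsplit, ← Measure.map_map (MeasurableEquiv.measurable _) (hF.prodMap hG),
    ← Measure.map_prod_map _ _ hF hG, hFμ, hGμ,
    (measurePreserving_arrowProdEquivProdArrow A B ι _ _).symm.map_eq]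

namespace IsBernoulli

theorem of_measurePreserving {X X' : Type*} [MeasurableSpace X] [MeasurableSpace X']
    {μ : Measure X} {μ' : Measure X'} {α : X → X} {α' : X' → X'} {e : X → X'}
    (he : MeasurePreserving e μ μ') (hconj : ∀ᵐ x ∂μ, e (α x) = α' (e x)) {f : X' → X}
    (hf : Measurable f) (hfe : ∀ᵐ x ∂μ, f (e x) = x) (h : IsBernoulli μ' α') :
    IsBernoulli μ α := by
  obtain ⟨A, mA, ν, hν, c, hc, hshift, hpi, g, hg, hgc⟩ := h
  have hqmp := he.quasiMeasurePreserving
  refine ⟨A, mA, ν, hν, c ∘ e, hc.comp he.measurable, ?_, fun s => ?_, f ∘ g, hf.comp hg, ?_⟩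
  · filter_upwards [hconj, hqmp.ae hshift] with x hx hx'
    simp only [Function.comp_apply, hx, hx']
  · rw [← hpi s, ← he.map_eq, Measure.map_map (measurable_pi_lambda _ fun i => hc.eval)
      he.measurable]
    rfl
  · filter_upwards [hqmp.ae hgc, hfe] with x hx hx'
    simp only [Function.comp_apply, hx, hx']

theorem prod {Y T : Type*} [MeasurableSpace Y] [MeasurableSpace T] {μY : Measure Y}
    {μT : Measure T} [SFinite μY] [SFinite μT] {αY : Y → Y} {αT : T → T}
    (hY : IsBernoulli μY αY) (hT : IsBernoulli μT αT) :
    IsBernoulli (μY.prod μT) (Prod.map αY αT) := by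
  obtain ⟨A, mA, νA, hνA, cY, hcY, hshiftY, hpiY, gY, hgY, hgcY⟩ := hY
  obtain ⟨B, mB, νB, hνB, cT, hcT, hshiftT, hpiT, gT, hgT, hgcT⟩ := hT
  refine ⟨A × B, inferInstance, νA.prod νB, inferInstance, fun p n => (cY p.1 n, cT p.2 n),
    ?_, ?_, fun s => ?_, fun w => (gY fun n => (w n).1, gT fun n => (w n).2), ?_, ?_⟩
  · exact measurable_pi_lambda _ fun n =>
      (hcY.comp measurable_fst).eval.prodMk (hcT.comp measurable_snd).eval
  · filter_upwards [Measure.quasiMeasurePreserving_fst.ae hshiftY,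
      Measure.quasiMeasurePreserving_snd.ae hshiftT] with p hpY hpT
    simp only [Prod.map_fst, Prod.map_snd, hpY, hpT]
  · exact Measure.map_prod_eq_pi_prod (measurable_pi_lambda _ fun i => hcY.eval)
      (measurable_pi_lambda _ fun i => hcT.eval) (hpiY s) (hpiT s)
  · exact (hgY.comp (measurable_pi_lambda _ fun n => (measurable_pi_apply n).fst)).prodMk
      (hgT.comp (measurable_pi_lambda _ fun n => (measurable_pi_apply n).snd))
  · filter_upwards [Measure.quasiMeasurePreserving_fst.ae hgcY,
      Measure.quasiMeasurePreserving_snd.ae hgcT] with p hpY hpT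
    simp only [hpY, hpT]

end IsBernoulli

theorem bernoulli_of_isomorphic_to_product_of_bernoulli_general
    {X Y T : Type*} [MeasurableSpace X] [MeasurableSpace Y] [MeasurableSpace T]
    (μ : Measure X) (μY : Measure Y) (μT : Measure T)
    [IsProbabilityMeasure μY] [IsProbabilityMeasure μT]
    (αX : X → X) (αY : Y → Y) (αT : T → T)
    -- the measurable isomorphism (mod 0) with the direct product system:
    (e : X → Y × T) (hepres : MeasurePreserving e μ (μY.prod μT))
    (hequiv : ∀ᵐ x ∂μ, e (αX x) = (αY (e x).1, αT (e x).2))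
    (einv : Y × T → X) (heinv : Measurable einv) (heinj : ∀ᵐ x ∂μ, einv (e x) = x)
    (hBerY : IsBernoulli μY αY) (hBerT : IsBernoulli μT αT) :
    IsBernoulli μ αX :=
  (hBerY.prod hBerT).of_measurePreserving hepres hequiv heinv heinj

/-- If the system `(X, μ, α_X)` (an ergodic nilmanifold automorphism over the
central torus fibration) is measurably isomorphic to the direct product of the factor
system on `Y = G/(ZΛ)` and the toral system on `T = ZΛ/Λ`, and both factors are
Bernoulli, then `(X, μ, α_X)` is Bernoulli. -/
theorem bernoulli_of_isomorphic_to_product_of_bernoulli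
    {X Y T : Type*} [MeasurableSpace X] [MeasurableSpace Y] [MeasurableSpace T]
    (μ : Measure X) (μY : Measure Y) (μT : Measure T)
    [IsProbabilityMeasure μ] [IsProbabilityMeasure μY] [IsProbabilityMeasure μT]
    (αX : X → X) (αY : Y → Y) (αT : T → T)
    (hX : MeasurePreserving αX μ μ) (hY : MeasurePreserving αY μY μY)
    (hTmp : MeasurePreserving αT μT μT)
    (hergX : Ergodic αX μ) (hergT : Ergodic αT μT)
    -- the measurable isomorphism (mod 0) with the direct product system:
    (e : X → Y × T) (he : Measurable e) (hepres : MeasurePreserving e μ (μY.prod μT))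
    (hequiv : ∀ᵐ x ∂μ, e (αX x) = (αY (e x).1, αT (e x).2))
    (einv : Y × T → X) (heinv : Measurable einv) (heinj : ∀ᵐ x ∂μ, einv (e x) = x)
    (hBerY : IsBernoulli μY αY) (hBerT : IsBernoulli μT αT) :
    IsBernoulli μ αX :=
  bernoulli_of_isomorphic_to_product_of_bernoulli_general μ μY μT αX αY αT e hepres hequiv einv
    heinv heinj hBerY hBerT
end
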